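/- arXiv:2103.02897 — 4 statements merged into one kernel-verified Lean document; each statement's English description precedes it below -/
import Mathlib

section
/- Let (u_{n,n}) be real numbers defined by u_{1,1} = 1 and the recurrence (1 - n)u_{n,n} = (1/2) Σ_{k=1}^{n-1} (n - k) u_{k,k} u_{n-k,n-k} for n ≥ 2. Then the formal power series y(x) = Σ_{n≥1} u_{n,n} x^n satisfies y e^{y/2} = x, i.e., y(x) = 2W(x/2) where W is the Lambert W function. -/
open PowerSeries Finset

namespace Stmt0Aux

noncomputable def c (k : ℕ) : ℝ := (1/2 : ℝ) ^ k / (Nat.factorial k : ℝ)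

noncomputable def S (u : ℕ → ℝ) (M : ℕ) : PowerSeries ℝ :=
  ∑ k ∈ Finset.range (M + 1), (c k) • (PowerSeries.mk u) ^ k

noncomputable def E (u : ℕ → ℝ) : PowerSeries ℝ :=
  PowerSeries.mk fun n => PowerSeries.coeff n (S u n)

lemma coeff_pow_eq_zero {u : ℕ → ℝ} (h0 : u 0 = 0) {n k : ℕ} (h : n < k) :
    PowerSeries.coeff n ((PowerSeries.mk u) ^ k) = 0 := by
  have hX : (X : PowerSeries ℝ) ∣ PowerSeries.mk u := by
    rw [PowerSeries.X_dvd_iff]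
    simpa using h0
  obtain ⟨q, hq⟩ := pow_dvd_pow_of_dvd hX k
  rw [hq, PowerSeries.coeff_X_pow_mul', if_neg (by omega)]

lemma coeff_S {u : ℕ → ℝ} (h0 : u 0 = 0) {n M : ℕ} (h : n ≤ M) :
    PowerSeries.coeff n (S u M) = PowerSeries.coeff n (E u) := by
  rw [E, PowerSeries.coeff_mk, S, S, map_sum, map_sum]
  refine (Finset.sum_subset (by intro x hx; simp_all; omega) ?_).symm
  intro k hk hk2
  simp only [Finset.mem_range] at hk hk2
  rw [PowerSeries.coeff_smul, coeff_pow_eq_zero h0 (by omega), smul_zero]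

lemma coeff_mul_congr (P A B : PowerSeries ℝ) (n : ℕ)
    (h : ∀ j ≤ n, PowerSeries.coeff j A = PowerSeries.coeff j B) :
    PowerSeries.coeff n (P * A) = PowerSeries.coeff n (P * B) := by
  rw [PowerSeries.coeff_mul, PowerSeries.coeff_mul]
  refine Finset.sum_congr rfl fun p hp => ?_
  rw [h p.2 (by have := Finset.HasAntidiagonal.mem_antidiagonal.mp hp; omega)]

lemma c_succ (j : ℕ) : c (j + 1) * ((j : ℝ) + 1) = (1/2) * c j := by
  rw [c, c, Nat.factorial_succ]
  push_cast
  have h1 : (Nat.factorial j : ℝ) ≠ 0 := Nat.cast_ne_zero.mpr (Nat.factorial_ne_zero j)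
  field_simp
  ring

lemma deriv_S (u : ℕ → ℝ) (M : ℕ) :
    PowerSeries.derivative ℝ (S u (M + 1)) =
      PowerSeries.C (1/2 : ℝ) * PowerSeries.derivative ℝ (PowerSeries.mk u) * S u M := by
  set y := PowerSeries.mk u
  rw [S, map_sum, Finset.sum_range_succ']
  have h0 : PowerSeries.derivative ℝ (c 0 • y ^ 0) = 0 := by
    simp [Derivation.leibniz_pow]
  rw [h0, add_zero]
  rw [S, Finset.mul_sum]
  refine Finset.sum_congr rfl fun j hj => ?_
  rw [Derivation.map_smul, Derivation.leibniz_pow]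
  simp only [Nat.add_sub_cancel, smul_eq_mul, nsmul_eq_mul, smul_eq_C_mul]
  have hc : ((j : PowerSeries ℝ) + 1) = PowerSeries.C ((j : ℝ) + 1) := by
    rw [map_add, map_one, map_natCast]
  push_cast
  rw [hc, show (PowerSeries.C) (c (j + 1)) * ((PowerSeries.C) ((j:ℝ) + 1) * (y ^ j * PowerSeries.derivative ℝ y)) = (PowerSeries.C) (c (j + 1) * ((j:ℝ)+1)) * (y ^ j * PowerSeries.derivative ℝ y) by rw [map_mul]; ring,
    c_succ, map_mul]
  ring

lemma deriv_E {u : ℕ → ℝ} (h0 : u 0 = 0) :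
    PowerSeries.derivative ℝ (E u) =
      PowerSeries.C (1/2 : ℝ) * PowerSeries.derivative ℝ (PowerSeries.mk u) * E u := by
  ext n
  have h1 : PowerSeries.coeff n (PowerSeries.derivative ℝ (E u)) =
      PowerSeries.coeff n (PowerSeries.derivative ℝ (S u (n + 1))) := by
    rw [PowerSeries.coeff_derivative, PowerSeries.coeff_derivative,
      coeff_S h0 (le_refl (n+1))]
  rw [h1, deriv_S, mul_assoc, mul_assoc, PowerSeries.coeff_C_mul, PowerSeries.coeff_C_mul]
  exact congrArg _ (coeff_mul_congr _ _ _ n fun j hj => coeff_S h0 hj)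

lemma ode (u : ℕ → ℝ) (h0 : u 0 = 0)
    (hrec : ∀ n : ℕ, 2 ≤ n →
      (1 - (n : ℝ)) * u n =
        (1 / 2) * ∑ k ∈ Finset.Icc 1 (n - 1), ((n : ℝ) - (k : ℝ)) * u k * u (n - k)) :
    PowerSeries.mk u = X * PowerSeries.derivative ℝ (PowerSeries.mk u) +
      PowerSeries.C (1/2 : ℝ) * (X * (PowerSeries.mk u * PowerSeries.derivative ℝ (PowerSeries.mk u))) := by
  ext n
  rw [map_add, PowerSeries.coeff_mk, PowerSeries.coeff_C_mul]
  match n with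
  | 0 =>
    simp [h0, PowerSeries.coeff_zero_eq_constantCoeff]
  | (m + 1) =>
    rw [PowerSeries.coeff_succ_X_mul, PowerSeries.coeff_succ_X_mul,
      PowerSeries.coeff_derivative, PowerSeries.coeff_mk]
    have hmul : PowerSeries.coeff m (PowerSeries.mk u * PowerSeries.derivative ℝ (PowerSeries.mk u)) =
        ∑ i ∈ Finset.range (m + 1), u i * (u (m - i + 1) * ((m - i : ℕ) + 1)) := by
      rw [PowerSeries.coeff_mul, Finset.Nat.sum_antidiagonal_eq_sum_range_succ_mk]
      refine Finset.sum_congr rfl fun i hi => ?_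
      rw [PowerSeries.coeff_mk, PowerSeries.coeff_derivative, PowerSeries.coeff_mk]
    rw [hmul]
    match m with
    | 0 => simp [h0]
    | (m' + 1) =>
      have hrec' := hrec (m' + 2) (by omega)
      have hsum : ∑ i ∈ Finset.range (m' + 2), u i * (u (m' + 1 - i + 1) * ((m' + 1 - i : ℕ) + 1))
          = ∑ i ∈ Finset.range (m' + 1), u (i + 1) * (u (m' + 1 - i) * ((m' - i : ℕ) + 1)) := by
        rw [Finset.sum_range_succ']
        simp only [h0, zero_mul, add_zero]
        refine Finset.sum_congr rfl fun i hi => ?_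
        simp only [Finset.mem_range] at hi
        have e1 : m' + 1 - (i + 1) = m' - i := by omega
        have e2 : m' - i + 1 = m' + 1 - i := by omega
        rw [e1, e2]
      rw [hsum]
      have hIcc : ∑ k ∈ Finset.Icc 1 (m' + 2 - 1), ((m' + 2 : ℕ) - (k : ℝ)) * u k * u (m' + 2 - k)
          = ∑ i ∈ Finset.range (m' + 1), (((m' : ℝ) + 2) - ((i : ℝ) + 1)) * u (i + 1) * u (m' + 1 - i) := by
        rw [show m' + 2 - 1 = m' + 1 from rfl, ← Finset.Ico_add_one_right_eq_Icc, Finset.sum_Ico_eq_sum_range]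
        refine Finset.sum_congr rfl fun i hi => ?_
        simp only [Finset.mem_range] at hi
        rw [show m' + 2 - (1 + i) = m' + 1 - i from by omega,
          show 1 + i = i + 1 from by omega]
        push_cast
        ring
      rw [hIcc] at hrec'
      have heq : ∑ i ∈ Finset.range (m' + 1), u (i + 1) * (u (m' + 1 - i) * ((m' - i : ℕ) + 1))
          = ∑ i ∈ Finset.range (m' + 1), (((m' : ℝ) + 2) - ((i : ℝ) + 1)) * u (i + 1) * u (m' + 1 - i) := by
        refine Finset.sum_congr rfl fun i hi => ?_
        simp only [Finset.mem_range] at hi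
        have : ((m' - i : ℕ) : ℝ) = (m' : ℝ) - (i : ℝ) := by
          push_cast [Nat.cast_sub (by omega : i ≤ m')]; rfl
        rw [this]; ring
      rw [heq]
      push_cast at hrec' ⊢
      linarith

end Stmt0Aux

open Stmt0Aux
/-- Let `u n` (the coefficients `u_{n,n}`) satisfy `u 1 = 1` and
`(1 - n) u n = (1/2) Σ_{k=1}^{n-1} (n - k) u k u (n-k)` for `n ≥ 2`.  Then the formal power
series `y(x) = Σ_{n ≥ 1} u n x^n` satisfies `y e^{y/2} = x` as formal power series, i.e.
every coefficient of `y * exp(y/2)` agrees with the corresponding coefficient of `X`.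
(Since `y` has zero constant term, the `N`-th coefficient of `exp(y/2)` equals the `N`-th
coefficient of the finite sum `Σ_{k=0}^{N} (1/k!) (y/2)^k`.) -/
theorem stmt0 (u : ℕ → ℝ) (h0 : u 0 = 0) (h1 : u 1 = 1)
    (hrec : ∀ n : ℕ, 2 ≤ n →
      (1 - (n : ℝ)) * u n =
        (1 / 2) * ∑ k ∈ Finset.Icc 1 (n - 1), ((n : ℝ) - (k : ℝ)) * u k * u (n - k)) :
    ∀ N : ℕ,
      (PowerSeries.coeff N)
        ((PowerSeries.mk u) *
          ∑ k ∈ Finset.range (N + 1),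
            (((1 / 2 : ℝ) ^ k / (Nat.factorial k : ℝ)) • (PowerSeries.mk u) ^ k)) =
      (PowerSeries.coeff N) (PowerSeries.X : PowerSeries ℝ) := by
  intro N
  set y := PowerSeries.mk u with hy
  -- the truncated sum is `S u N`
  have hSdef : (∑ k ∈ Finset.range (N + 1),
      (((1 / 2 : ℝ) ^ k / (Nat.factorial k : ℝ)) • (PowerSeries.mk u) ^ k)) = S u N := rfl
  rw [hSdef, coeff_mul_congr y (S u N) (E u) N (fun j hj => coeff_S h0 hj)]
  -- the key differential identity
  have hDG : X * PowerSeries.derivative ℝ (y * E u) = y * E u := by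
    have hleib : PowerSeries.derivative ℝ (y * E u) =
        y * PowerSeries.derivative ℝ (E u) + E u * PowerSeries.derivative ℝ y := by
      have := Derivation.leibniz (PowerSeries.derivative ℝ) y (E u)
      simp only [smul_eq_mul] at this; exact this
    rw [hleib, deriv_E h0]
    have : X * (y * (PowerSeries.C (1/2 : ℝ) * PowerSeries.derivative ℝ y * E u) +
        E u * PowerSeries.derivative ℝ y) =
        (X * PowerSeries.derivative ℝ y +
          PowerSeries.C (1/2 : ℝ) * (X * (y * PowerSeries.derivative ℝ y))) * E u := by
      ring
    rw [this, ← ode u h0 hrec]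
  match N with
  | 0 =>
    simp [PowerSeries.coeff_zero_eq_constantCoeff, h0, hy]
  | 1 =>
    have hE0 : PowerSeries.coeff 0 (E u) = 1 := by
      simp [E, S, c]
    rw [PowerSeries.coeff_mul]
    simp [Finset.Nat.antidiagonal_succ, hE0, h0, h1, hy]
  | (m + 2) =>
    have hg := congrArg (PowerSeries.coeff (m + 2)) hDG
    rw [PowerSeries.coeff_succ_X_mul, PowerSeries.coeff_derivative] at hg
    set g := PowerSeries.coeff (m + 2) (y * E u) with hgdef
    have hzero : g = 0 := by
      have h2 : g * ((m : ℝ) + 1) = 0 := by push_cast at hg; linarith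
      rcases mul_eq_zero.mp h2 with h | h
      · exact h
      · exfalso; have : (0:ℝ) < (m:ℝ) + 1 := by positivity
        linarith
    rw [hzero, PowerSeries.coeff_X, if_neg (by omega)]
end

section
/- Let f = Σ_{n=2}^∞ f_n cos(nx) with ‖f‖_X^2 = Σ_{n≥2}(n−1)^2 f_n^2 < ∞. Then ‖2f sin(2x) − f' cos(2x)‖_{L^2}^2 ≤ (17/4) ‖f‖_X^2, with the L^2 norm normalized so that ‖sin(nx)‖_{L^2} = 1. -/
open MeasureTheory AddCircle

noncomputable section

namespace Stmt4Aux



lemma ofReal_cos_eq (y : ℝ) :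
    ((Real.cos y : ℝ) : ℂ) = (Complex.exp (Complex.I * y) + Complex.exp (Complex.I * (-(y:ℂ))))/2 := by
  have h1 : Complex.exp (Complex.I * (y:ℂ)) = Complex.cos y + Complex.sin y * Complex.I := by
    rw [mul_comm, Complex.exp_mul_I]
  have h2 : Complex.exp (Complex.I * (-(y:ℂ))) = Complex.cos y - Complex.sin y * Complex.I := by
    rw [mul_comm, Complex.exp_mul_I, Complex.cos_neg, Complex.sin_neg]; ring
  rw [Complex.ofReal_cos, h1, h2]; ring

lemma integral_ek (k : ℤ) :
    (∫ x : ℝ in (-Real.pi)..Real.pi, Complex.exp (Complex.I * k * x))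
      = if k = 0 then ((2 * Real.pi : ℝ) : ℂ) else 0 := by
  split_ifs with hk
  · subst hk
    simp only [Int.cast_zero, mul_zero, zero_mul, Complex.exp_zero]
    rw [intervalIntegral.integral_const]
    rw [sub_neg_eq_add, Complex.real_smul]
    push_cast
    ring
  · have hc : (Complex.I * (k : ℂ)) ≠ 0 := by
      apply mul_ne_zero Complex.I_ne_zero
      exact_mod_cast hk
    have := integral_exp_mul_complex (a := -Real.pi) (b := Real.pi) hc
    simp only [mul_assoc] at this ⊢
    rw [this]
    have : Complex.exp (Complex.I * ((k:ℂ) * (Real.pi : ℂ)))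
        = Complex.exp (Complex.I * ((k:ℂ) * ((-Real.pi : ℝ) : ℂ))) := by
      rw [Complex.exp_eq_exp_iff_exists_int]
      exact ⟨k, by push_cast; ring⟩
    rw [this, sub_self, zero_div]

lemma tsum_indicator (a : ℕ → ℝ) (s : ℤ) :
    ∑' n : ℕ, a n * (if (n : ℤ) = s then (1:ℝ) else 0)
      = if 0 ≤ s then a s.natAbs else 0 := by
  by_cases hs : 0 ≤ s
  · rw [if_pos hs, tsum_eq_single s.natAbs]
    · rw [if_pos (by omega), mul_one]
    · intro n hn
      rw [if_neg (by omega), mul_zero]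
  · rw [if_neg hs]
    convert tsum_zero with n
    rw [if_neg (by omega), mul_zero]

lemma summable_indicator (a : ℕ → ℝ) (s : ℤ) :
    Summable (fun n : ℕ => a n * (if (n : ℤ) = s then (1:ℝ) else 0)) := by
  apply summable_of_ne_finset_zero (s := {s.natAbs})
  intro n hn
  simp only [Finset.mem_singleton] at hn
  rw [if_neg (by omega), mul_zero]

lemma integral_mode (n : ℕ) (m : ℤ) :
    (∫ x : ℝ in (-Real.pi)..Real.pi,
      Complex.exp (Complex.I * ((-m : ℤ):ℂ) * x) * ((Real.cos (n*x) : ℝ):ℂ) * ((Real.cos (2*x):ℝ):ℂ))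
    = (((Real.pi/2) * ((if ((n:ℤ) = m-2) then (1:ℝ) else 0) + (if ((n:ℤ) = m+2) then (1:ℝ) else 0)
        + (if ((n:ℤ) = 2-m) then (1:ℝ) else 0) + (if ((n:ℤ) = -m-2) then (1:ℝ) else 0)) : ℝ) : ℂ) := by
  set k1 : ℤ := (n:ℤ) + 2 - m with hk1
  set k2 : ℤ := (n:ℤ) - 2 - m with hk2
  set k3 : ℤ := -(n:ℤ) + 2 - m with hk3
  set k4 : ℤ := -(n:ℤ) - 2 - m with hk4
  have hpt : ∀ x : ℝ,
      Complex.exp (Complex.I * ((-m : ℤ):ℂ) * x) * ((Real.cos (n*x) : ℝ):ℂ) * ((Real.cos (2*x):ℝ):ℂ)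
      = (Complex.exp (Complex.I * (k1:ℂ) * x) + Complex.exp (Complex.I * (k2:ℂ) * x)
        + Complex.exp (Complex.I * (k3:ℂ) * x) + Complex.exp (Complex.I * (k4:ℂ) * x))/4 := by
    intro x
    rw [ofReal_cos_eq (n*x), ofReal_cos_eq (2*x)]
    have e1 : Complex.I * ((-m : ℤ):ℂ) * x + Complex.I * ((n*x:ℝ):ℂ) + Complex.I * ((2*x:ℝ):ℂ)
        = Complex.I * (k1:ℂ) * x := by rw [hk1]; push_cast; ring
    have e2 : Complex.I * ((-m : ℤ):ℂ) * x + Complex.I * ((n*x:ℝ):ℂ) + Complex.I * (-((2*x:ℝ):ℂ))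
        = Complex.I * (k2:ℂ) * x := by rw [hk2]; push_cast; ring
    have e3 : Complex.I * ((-m : ℤ):ℂ) * x + Complex.I * (-((n*x:ℝ):ℂ)) + Complex.I * ((2*x:ℝ):ℂ)
        = Complex.I * (k3:ℂ) * x := by rw [hk3]; push_cast; ring
    have e4 : Complex.I * ((-m : ℤ):ℂ) * x + Complex.I * (-((n*x:ℝ):ℂ)) + Complex.I * (-((2*x:ℝ):ℂ))
        = Complex.I * (k4:ℂ) * x := by rw [hk4]; push_cast; ring
    rw [← e1, ← e2, ← e3, ← e4]
    simp only [Complex.exp_add]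
    ring
  rw [intervalIntegral.integral_congr (g :=
    fun x : ℝ => (Complex.exp (Complex.I * (k1:ℂ) * x) + Complex.exp (Complex.I * (k2:ℂ) * x)
        + Complex.exp (Complex.I * (k3:ℂ) * x) + Complex.exp (Complex.I * (k4:ℂ) * x))/4)
    (fun x _ => hpt x)]
  have hint : ∀ k : ℤ, IntervalIntegrable (fun x : ℝ => Complex.exp (Complex.I * (k:ℂ) * x))
      MeasureTheory.volume (-Real.pi) Real.pi := by
    intro k
    apply Continuous.intervalIntegrable
    exact Complex.continuous_exp.comp (by continuity)
  rw [intervalIntegral.integral_div]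
  rw [intervalIntegral.integral_add (((hint k1).add (hint k2)).add (hint k3)) (hint k4),
    intervalIntegral.integral_add ((hint k1).add (hint k2)) (hint k3),
    intervalIntegral.integral_add (hint k1) (hint k2)]
  rw [integral_ek k1, integral_ek k2, integral_ek k3, integral_ek k4]
  have c1 : ((n:ℤ) + 2 - m = 0) ↔ ((n:ℤ) = m-2) := by omega
  have c2 : ((n:ℤ) - 2 - m = 0) ↔ ((n:ℤ) = m+2) := by omega
  have c3 : (-(n:ℤ) + 2 - m = 0) ↔ ((n:ℤ) = 2-m) := by omega
  have c4 : (-(n:ℤ) - 2 - m = 0) ↔ ((n:ℤ) = -m-2) := by omega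
  simp only [hk1, hk2, hk3, hk4, c1, c2, c3, c4]
  split_ifs <;> push_cast <;> ring

lemma tsum_four (a : ℕ → ℝ) (ha0 : a 0 = 0) (m : ℤ) :
    ∑' n : ℕ, a n * ((if ((n:ℤ) = m - 2) then (1:ℝ) else 0) + (if ((n:ℤ) = m + 2) then (1:ℝ) else 0)
      + (if ((n:ℤ) = 2 - m) then (1:ℝ) else 0) + (if ((n:ℤ) = -m - 2) then (1:ℝ) else 0))
    = a (m-2).natAbs + a (m+2).natAbs := by
  have hsplit : ∀ n : ℕ, a n * ((if ((n:ℤ) = m - 2) then (1:ℝ) else 0) + (if ((n:ℤ) = m + 2) then (1:ℝ) else 0)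
      + (if ((n:ℤ) = 2 - m) then (1:ℝ) else 0) + (if ((n:ℤ) = -m - 2) then (1:ℝ) else 0))
      = a n * (if ((n:ℤ) = m - 2) then (1:ℝ) else 0) + a n * (if ((n:ℤ) = m + 2) then (1:ℝ) else 0)
      + a n * (if ((n:ℤ) = 2 - m) then (1:ℝ) else 0) + a n * (if ((n:ℤ) = -m - 2) then (1:ℝ) else 0) := by
    intro n; ring
  rw [tsum_congr hsplit]
  rw [Summable.tsum_add (((summable_indicator a (m-2)).add (summable_indicator a (m+2))).add
      (summable_indicator a (2-m))) (summable_indicator a (-m-2)),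
    Summable.tsum_add ((summable_indicator a (m-2)).add (summable_indicator a (m+2)))
      (summable_indicator a (2-m)),
    Summable.tsum_add (summable_indicator a (m-2)) (summable_indicator a (m+2))]
  rw [tsum_indicator, tsum_indicator, tsum_indicator, tsum_indicator]
  rcases (show (3 ≤ m) ∨ m = 2 ∨ (-1 ≤ m ∧ m ≤ 1) ∨ m = -2 ∨ m ≤ -3 by omega) with
    h | h | h | h | h
  · rw [if_pos (by omega), if_pos (by omega), if_neg (by omega), if_neg (by omega)]; ring
  · subst h; norm_num [ha0]
  · rw [if_neg (by omega), if_pos (by omega), if_pos (by omega), if_neg (by omega)]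
    rw [show (2 - m).natAbs = (m-2).natAbs from by omega]
    ring
  · subst h; norm_num [ha0]
  · rw [if_neg (by omega), if_neg (by omega), if_pos (by omega), if_pos (by omega)]
    rw [show (2 - m).natAbs = (m-2).natAbs from by omega,
      show (-m - 2).natAbs = (m+2).natAbs from by omega]
    ring



/-- weights for the weighted AM-GM splitting -/
def tw : ℤ → ℝ := fun m => if m = 4 then 1/16 else if m = -4 then 16 else if 0 ≤ m then 1/2 else 2

lemma tw_pos (m : ℤ) : 0 < tw m := by unfold tw; split_ifs <;> norm_num

lemma tw_le (m : ℤ) : tw m ≤ 16 := by unfold tw; split_ifs <;> norm_num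

lemma tw_inv_le (m : ℤ) : (tw m)⁻¹ ≤ 16 := by unfold tw; split_ifs <;> norm_num

def cfn (a : ℕ → ℝ) (m : ℤ) : ℝ := (a (m-2).natAbs + a (m+2).natAbs)/4

def R1fn (a : ℕ → ℝ) (m : ℤ) : ℝ := (1/16) * (m:ℝ)^2 * ((1 + tw m) * a (m-2).natAbs ^2)

def R2fn (a : ℕ → ℝ) (m : ℤ) : ℝ := (1/16) * (m:ℝ)^2 * ((1 + (tw m)⁻¹) * a (m+2).natAbs ^2)

def Dfn (a : ℕ → ℝ) (k : ℤ) : ℝ := 17/8 * (|(k:ℝ)| - 1)^2 * a k.natAbs ^2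

lemma sqcast (m : ℤ) : ((m:ℝ))^2 = ((m.natAbs:ℝ))^2 := by
  rw [Nat.cast_natAbs, Int.cast_abs, sq_abs]

lemma step1 (a : ℕ → ℝ) (m : ℤ) :
    (m:ℝ)^2 * cfn a m ^2 ≤ R1fn a m + R2fn a m := by
  have ht := tw_pos m
  set x := a (m-2).natAbs with hx
  set y := a (m+2).natAbs with hy
  have key : (x + y)^2 ≤ (1 + tw m) * x^2 + (1 + (tw m)⁻¹) * y^2 := by
    have h : (1 + tw m) * x^2 + (1 + (tw m)⁻¹) * y^2 - (x + y)^2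
        = (tw m * x - y)^2 / tw m := by
      field_simp
      ring
    nlinarith [div_nonneg (sq_nonneg (tw m * x - y)) ht.le]
  have h2 := mul_le_mul_of_nonneg_left key (show (0:ℝ) ≤ (m:ℝ)^2/16 by positivity)
  calc (m:ℝ)^2 * cfn a m ^2 = (m:ℝ)^2/16 * (x+y)^2 := by
        simp only [cfn, ← hx, ← hy]; ring
    _ ≤ (m:ℝ)^2/16 * ((1 + tw m) * x^2 + (1 + (tw m)⁻¹) * y^2) := h2
    _ = R1fn a m + R2fn a m := by simp only [R1fn, R2fn, ← hx, ← hy]; ring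

lemma SBnat (a : ℕ → ℝ) (ha0 : a 0 = 0) (ha1 : a 1 = 0)
    (hX : Summable fun n : ℕ => ((n:ℝ)-1)^2 * a n^2) :
    Summable (fun n : ℕ => ((n:ℝ)+4)^2 * a n ^2) := by
  apply Summable.of_nonneg_of_le (fun n => by positivity) _ (hX.mul_left 36)
  intro n
  match n with
  | 0 => simp [ha0]
  | 1 => simp [ha1]
  | (n+2) =>
    have hn : (0:ℝ) ≤ (n:ℝ) := Nat.cast_nonneg n
    have : ((n:ℝ)+2) = ((n+2 : ℕ) : ℝ) := by push_cast; ring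
    push_cast
    nlinarith [sq_nonneg (a (n+2)), mul_nonneg hn hn, mul_nonneg (mul_nonneg hn hn) (sq_nonneg (a (n+2))), mul_nonneg hn (sq_nonneg (a (n+2)))]

lemma SBZ (a : ℕ → ℝ) (ha0 : a 0 = 0) (ha1 : a 1 = 0)
    (hX : Summable fun n : ℕ => ((n:ℝ)-1)^2 * a n^2) :
    Summable (fun m : ℤ => ((m.natAbs:ℝ)+4)^2 * a m.natAbs ^2) := by
  apply Summable.of_nat_of_neg (f := fun m : ℤ => ((m.natAbs:ℝ)+4)^2 * a m.natAbs ^2)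
  · simpa using SBnat a ha0 ha1 hX
  · simpa using SBnat a ha0 ha1 hX

lemma hR1sum (a : ℕ → ℝ) (ha0 : a 0 = 0) (ha1 : a 1 = 0)
    (hX : Summable fun n : ℕ => ((n:ℝ)-1)^2 * a n^2) :
    Summable (R1fn a) := by
  have hmaj : Summable (fun m : ℤ => (17/16) * ((((m-2).natAbs:ℝ)+4)^2 * a (m-2).natAbs ^2)) := by
    have := ((SBZ a ha0 ha1 hX).mul_left (17/16))
    have h2 := (Equiv.subRight (2:ℤ)).summable_iff.mpr this
    simpa [Function.comp_def] using h2
  apply Summable.of_nonneg_of_le _ _ hmaj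
  · intro m
    have := tw_pos m
    simp only [R1fn]
    positivity
  · intro m
    have hm2 : ((m:ℝ))^2 ≤ (((m-2).natAbs:ℝ)+4)^2 := by
      rw [sqcast m]
      apply pow_le_pow_left₀ (by positivity)
      have h : m.natAbs ≤ (m-2).natAbs + 4 := by omega
      exact_mod_cast h
    have h1 := tw_le m
    simp only [R1fn]
    nlinarith [mul_nonneg (sub_nonneg.mpr hm2) (sq_nonneg (a (m-2).natAbs)),
      mul_nonneg (mul_nonneg (sub_nonneg.mpr (tw_le m)) (sq_nonneg (m:ℝ))) (sq_nonneg (a (m-2).natAbs))]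

lemma hR2sum (a : ℕ → ℝ) (ha0 : a 0 = 0) (ha1 : a 1 = 0)
    (hX : Summable fun n : ℕ => ((n:ℝ)-1)^2 * a n^2) :
    Summable (R2fn a) := by
  have hmaj : Summable (fun m : ℤ => (17/16) * ((((m+2).natAbs:ℝ)+4)^2 * a (m+2).natAbs ^2)) := by
    have := ((SBZ a ha0 ha1 hX).mul_left (17/16))
    have h2 := (Equiv.addRight (2:ℤ)).summable_iff.mpr this
    simpa [Function.comp_def] using h2
  apply Summable.of_nonneg_of_le _ _ hmaj
  · intro m
    have h1 := tw_pos m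
    have h2 : 0 < (tw m)⁻¹ := by positivity
    simp only [R2fn]
    positivity
  · intro m
    have hm2 : ((m:ℝ))^2 ≤ (((m+2).natAbs:ℝ)+4)^2 := by
      rw [sqcast m]
      apply pow_le_pow_left₀ (by positivity)
      have h : m.natAbs ≤ (m+2).natAbs + 4 := by omega
      exact_mod_cast h
    simp only [R2fn]
    nlinarith [mul_nonneg (sub_nonneg.mpr hm2) (sq_nonneg (a (m+2).natAbs)),
      mul_nonneg (mul_nonneg (sub_nonneg.mpr (tw_inv_le m)) (sq_nonneg (m:ℝ))) (sq_nonneg (a (m+2).natAbs))]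

lemma hkey (a : ℕ → ℝ) (ha1 : a 1 = 0) (k : ℤ) :
    2 * (R1fn a (k+2) + R2fn a (k-2)) ≤ Dfn a k := by
  have e1 : k + 2 - 2 = k := by ring
  have e2 : k - 2 + 2 = k := by ring
  simp only [R1fn, R2fn, Dfn, e1, e2]
  set x := a k.natAbs with hxdef
  rcases (show k = 1 ∨ k = -1 ∨ k = 0 ∨ k = 2 ∨ k = -2 ∨ k = 6 ∨ k = -6
      ∨ (3 ≤ k ∧ k ≠ 6) ∨ (k ≤ -3 ∧ k ≠ -6) by omega) with
    h | h | h | h | h | h | h | h | h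
  · subst h; have : x = 0 := ha1; rw [this]; norm_num
  · subst h; have : x = 0 := ha1; rw [this]; norm_num
  · subst h; norm_num [tw]; nlinarith [sq_nonneg x]
  · subst h; norm_num [tw]; nlinarith [sq_nonneg x]
  · subst h; norm_num [tw]; nlinarith [sq_nonneg x]
  · subst h; norm_num [tw]; nlinarith [sq_nonneg x]
  · subst h; norm_num [tw]; nlinarith [sq_nonneg x]
  · obtain ⟨h3, h6⟩ := h
    have ht1 : tw (k+2) = 1/2 := by
      unfold tw; rw [if_neg (by omega), if_neg (by omega), if_pos (by omega)]
    have ht2 : tw (k-2) = 1/2 := by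
      unfold tw; rw [if_neg (by omega), if_neg (by omega), if_pos (by omega)]
    have habs : |(k:ℝ)| = (k:ℝ) := by
      rw [abs_of_nonneg]; exact_mod_cast (by omega : (0:ℤ) ≤ k)
    have hk3 : (3:ℝ) ≤ (k:ℝ) := by exact_mod_cast h3
    rw [ht1, ht2, habs]
    norm_num
    nlinarith [mul_nonneg (sq_nonneg ((k:ℝ)-3)) (sq_nonneg x),
      mul_nonneg (sub_nonneg.mpr hk3) (sq_nonneg x), sq_nonneg x]
  · obtain ⟨h3, h6⟩ := h
    have ht1 : tw (k+2) = 2 := by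
      unfold tw; rw [if_neg (by omega), if_neg (by omega), if_neg (by omega)]
    have ht2 : tw (k-2) = 2 := by
      unfold tw; rw [if_neg (by omega), if_neg (by omega), if_neg (by omega)]
    have habs : |(k:ℝ)| = -(k:ℝ) := by
      rw [abs_of_nonpos]; exact_mod_cast (by omega : k ≤ (0:ℤ))
    have hk3 : (k:ℝ) ≤ -3 := by exact_mod_cast h3
    rw [ht1, ht2, habs]
    norm_num
    nlinarith [mul_nonneg (sq_nonneg ((k:ℝ)+3)) (sq_nonneg x),
      mul_nonneg (sub_nonneg.mpr (neg_le_neg hk3)) (sq_nonneg x), sq_nonneg x,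
      mul_nonneg (sub_nonneg.mpr hk3) (sq_nonneg x)]

lemma coeff_bound (a : ℕ → ℝ) (ha0 : a 0 = 0) (ha1 : a 1 = 0)
    (hX : Summable fun n : ℕ => ((n:ℝ)-1)^2 * a n^2) :
    Summable (fun m : ℤ => (m:ℝ)^2 * cfn a m ^2) ∧
    2 * ∑' m : ℤ, (m:ℝ)^2 * cfn a m ^2 ≤ 17/4 * ∑' n : ℕ, ((n:ℝ)-1)^2 * a n^2 := by
  have hR1 := hR1sum a ha0 ha1 hX
  have hR2 := hR2sum a ha0 ha1 hX
  have hLsum : Summable (fun m : ℤ => (m:ℝ)^2 * cfn a m ^2) :=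
    Summable.of_nonneg_of_le (fun m => by positivity) (step1 a) (hR1.add hR2)
  refine ⟨hLsum, ?_⟩
  -- shifted summables
  have hre1sum : Summable (fun k : ℤ => R1fn a (k+2)) := by
    have := (Equiv.addRight (2:ℤ)).summable_iff.mpr hR1
    simpa [Function.comp_def] using this
  have hre2sum : Summable (fun k : ℤ => R2fn a (k-2)) := by
    have := (Equiv.subRight (2:ℤ)).summable_iff.mpr hR2
    simpa [Function.comp_def] using this
  -- reindexing equalities
  have hre1 : ∑' (k:ℤ), R1fn a (k+2) = ∑' m, R1fn a m := by
    have := (Equiv.addRight (2:ℤ)).tsum_eq (R1fn a)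
    simpa using this
  have hre2 : ∑' (k:ℤ), R2fn a (k-2) = ∑' m, R2fn a m := by
    have := (Equiv.subRight (2:ℤ)).tsum_eq (R2fn a)
    simpa using this
  -- HasSum for D
  set S := ∑' n : ℕ, ((n:ℝ)-1)^2 * a n^2 with hS
  have hq : HasSum (fun n : ℕ => 17/8 * (((n:ℝ)-1)^2 * a n^2)) (17/8 * S) :=
    hX.hasSum.mul_left _
  have hDnat : HasSum (fun n : ℕ => Dfn a n) (17/8 * S) := by
    have heq : (fun n : ℕ => Dfn a n) = fun n : ℕ => 17/8 * (((n:ℝ)-1)^2 * a n^2) := by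
      funext n
      simp only [Dfn, Int.natAbs_natCast, Int.cast_natCast, Nat.abs_cast]
      ring
    rw [heq]; exact hq
  have hDneg : HasSum (fun n : ℕ => Dfn a (-(n+1))) (17/8 * S) := by
    have heq : (fun n : ℕ => Dfn a (-(n+1)))
        = fun n : ℕ => 17/8 * (((((n+1:ℕ)):ℝ)-1)^2 * a (n+1)^2) := by
      funext n
      have h1 : ((-((n:ℤ)+1))).natAbs = n + 1 := by omega
      simp only [Dfn, h1]
      push_cast
      rw [abs_neg, abs_of_nonneg (by positivity : (0:ℝ) ≤ (n:ℝ)+1)]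
      ring
    rw [heq]
    exact (hasSum_nat_add_iff (f := fun n : ℕ => 17/8 * (((n:ℝ)-1)^2 * a n^2)) 1).mpr
      (by simpa [ha0] using hq)
  have hD : HasSum (Dfn a) (17/4 * S) := by
    have := hDnat.of_nat_of_neg_add_one hDneg
    convert this using 1
    ring
  calc 2 * ∑' m : ℤ, (m:ℝ)^2 * cfn a m ^2
      ≤ 2 * ∑' m : ℤ, (R1fn a m + R2fn a m) := by
        have := Summable.tsum_le_tsum (step1 a) hLsum (hR1.add hR2)
        linarith
    _ = 2 * (∑' m, R1fn a m + ∑' m, R2fn a m) := by rw [Summable.tsum_add hR1 hR2]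
    _ = ∑' k : ℤ, 2 * (R1fn a (k+2) + R2fn a (k-2)) := by
        rw [← hre1, ← hre2, ← Summable.tsum_add hre1sum hre2sum, ← tsum_mul_left]
    _ ≤ ∑' k, Dfn a k := by
        refine Summable.tsum_le_tsum (hkey a ha1) ?_ hD.summable
        exact (hre1sum.add hre2sum).mul_left 2
    _ = 17/4 * S := hD.tsum_eq


end Stmt4Aux

open MeasureTheory AddCircle Stmt4Aux in
open Real in
/-- Lemma `linear-bound2`: if `f = Σ_{n≥2} a n cos(nx)` with
`‖f‖_X² = Σ_{n≥2} (n-1)²(a n)² < ∞`, then `‖2 f sin 2x − f' cos 2x‖_{L²}² ≤ (17/4) ‖f‖_X²`,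
where the `L²` norm is normalized by `‖u‖² = (1/π) ∫_{-π}^{π} u²` (so `‖sin nx‖ = 1`). -/
theorem stmt4 (f f' : ℝ → ℝ) (a : ℕ → ℝ)
    (ha0 : a 0 = 0) (ha1 : a 1 = 0)
    (hX : Summable (fun n : ℕ => ((n : ℝ) - 1) ^ 2 * a n ^ 2))
    (hf : ∀ x : ℝ, HasSum (fun n : ℕ => a n * Real.cos (n * x)) (f x))
    (hf' : ∀ x : ℝ, HasDerivAt f (f' x) x) :
    (1 / π) * ∫ x in (-π)..π,
        (2 * f x * Real.sin (2 * x) - f' x * Real.cos (2 * x)) ^ 2 ≤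
      (17 / 4) * ∑' n : ℕ, ((n : ℝ) - 1) ^ 2 * a n ^ 2 := by
  have hπ : (0:ℝ) < Real.pi := Real.pi_pos
  haveI : Fact (0 < 2 * Real.pi) := ⟨Real.two_pi_pos⟩
  set u : ℝ → ℝ := fun x => 2 * f x * Real.sin (2 * x) - f' x * Real.cos (2 * x) with hu
  have hRHSnonneg : 0 ≤ (17 / 4) * ∑' n : ℕ, ((n : ℝ) - 1) ^ 2 * a n ^ 2 := by
    apply mul_nonneg (by norm_num)
    exact tsum_nonneg fun n => by positivity
  clear_value u
  rw [show (fun x : ℝ => (2 * f x * Real.sin (2 * x) - f' x * Real.cos (2 * x)) ^ 2)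
      = (fun x : ℝ => u x ^ 2) from by simp only [hu]]
  by_cases hI : IntervalIntegrable (fun x => u x ^ 2) MeasureTheory.volume (-Real.pi) Real.pi
  case neg =>
    rw [intervalIntegral.integral_undef hI, mul_zero]
    exact hRHSnonneg
  -- basic regularity
  have hfc : Continuous f := by
    rw [continuous_iff_continuousAt]; exact fun x => (hf' x).continuousAt
  have hf'm : Measurable f' := by
    have hfd : f' = deriv f := funext fun x => ((hf' x).deriv).symm
    rw [hfd]; exact measurable_deriv f
  have hum : Measurable u := by
    rw [hu]
    apply Measurable.sub
    · exact ((hfc.measurable.const_mul 2).mul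
        ((Real.continuous_sin.comp (continuous_const.mul continuous_id)).measurable))
    · exact hf'm.mul ((Real.continuous_cos.comp (continuous_const.mul continuous_id)).measurable)
  -- summability of |a|
  have hinvsum : Summable (fun n : ℕ => 1/((n:ℝ)-1)^2) := by
    have hbase : Summable (fun n : ℕ => 1/(n:ℝ)^2) := by
      have := Real.summable_one_div_nat_pow (p := 2)
      exact this.mpr (by norm_num)
    have h1 : Summable (fun n : ℕ => 1/((n:ℝ)+1)^2) := by
      have := (summable_nat_add_iff (f := fun n : ℕ => 1/(n:ℝ)^2) 1).mpr hbase
      simpa [add_comm] using this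
    have h2 := (summable_nat_add_iff (f := fun n : ℕ => 1/((n:ℝ)-1)^2) 2).mp ?_
    · exact h2
    · apply h1.congr
      intro n
      push_cast
      ring_nf
  have habs : Summable (fun n : ℕ => |a n|) := by
    apply Summable.of_nonneg_of_le (fun n => abs_nonneg _) _ ((hX.add hinvsum).div_const 2)
    intro n
    match n with
    | 0 => norm_num [ha0]
    | 1 => simp [ha1]
    | (n+2) =>
      have ht : (0:ℝ) < (n:ℝ)+1 := by positivity
      have h2 : (((n:ℝ)+1)*|a (n+2)|) * (1/((n:ℝ)+1)) = |a (n+2)| := by field_simp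
      have h3 : (1/((n:ℝ)+1))^2 = 1/((n:ℝ)+1)^2 := by rw [div_pow, one_pow]
      have key : 2*|a (n+2)| ≤ ((n:ℝ)+1)^2*a (n+2)^2 + 1/((n:ℝ)+1)^2 := by
        nlinarith [sq_nonneg (((n:ℝ)+1)*|a (n+2)| - 1/((n:ℝ)+1)), h2, h3, sq_abs (a (n+2))]
      have hcast : ((n:ℝ)+2-1) = (n:ℝ)+1 := by ring
      push_cast
      rw [hcast]
      linarith
  -- periodicity
  have hfp : Function.Periodic f (2*Real.pi) := by
    intro x
    have h2 := hf (x + 2*Real.pi)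
    have he : ∀ n : ℕ, a n * Real.cos (n*(x+2*Real.pi)) = a n * Real.cos (n*x) := by
      intro n
      congr 1
      rw [mul_add, mul_comm ((n:ℝ)) (2*Real.pi), show (n:ℝ)*x + 2*Real.pi*(n:ℝ)
        = (n:ℝ)*x + (n:ℕ)*(2*Real.pi) from by push_cast; ring]
      exact Real.cos_add_nat_mul_two_pi _ n
    rw [funext he] at h2
    exact h2.unique (hf x)
  have hf'p : Function.Periodic f' (2*Real.pi) := by
    intro x
    have h1 : HasDerivAt (fun y => f (y + 2*Real.pi)) (f' (x + 2*Real.pi)) x := by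
      have := (hf' (x + 2*Real.pi)).comp x ((hasDerivAt_id x).add_const (2*Real.pi))
      simpa [Function.comp_def] using this
    have h2 : (fun y => f (y + 2*Real.pi)) = f := funext fun y => hfp y
    rw [h2] at h1
    exact h1.unique (hf' x)
  have hup : Function.Periodic u (2*Real.pi) := by
    intro x
    simp only [hu]
    rw [show 2*(x+2*Real.pi) = 2*x + 2*Real.pi + 2*Real.pi from by ring,
      Real.sin_add_two_pi, Real.sin_add_two_pi, Real.cos_add_two_pi, Real.cos_add_two_pi,
      hfp x, hf'p x]
  -- the auxiliary function g and its derivative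
  set g : ℝ → ℝ := fun y => f y * Real.cos (2*y) with hg
  clear_value g
  have hgd : ∀ x, HasDerivAt g (-(u x)) x := by
    intro x
    have h1 : HasDerivAt (fun y : ℝ => 2*y) 2 x := by
      simpa using (hasDerivAt_id x).const_mul (2:ℝ)
    have h2 : HasDerivAt (fun y : ℝ => Real.cos (2*y)) (-Real.sin (2*x) * 2) x :=
      (Real.hasDerivAt_cos (2*x)).comp x h1
    have h3 : HasDerivAt (fun y => f y * Real.cos (2*y))
        (f' x * Real.cos (2*x) + f x * (-Real.sin (2*x) * 2)) x := (hf' x).mul h2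
    rw [hg]
    convert h3 using 1
    simp only [hu]
    ring
  have hgper : g Real.pi = g (-Real.pi) := by
    have h1 : f Real.pi = f (-Real.pi) := by
      have := hfp (-Real.pi)
      rw [show -Real.pi + 2*Real.pi = Real.pi from by ring] at this
      exact this
    simp only [hg]
    rw [h1, show (2*(-Real.pi)) = -(2*Real.pi) from by ring, Real.cos_neg]
  -- u is interval integrable
  have hIu : IntervalIntegrable u MeasureTheory.volume (-Real.pi) Real.pi := by
    have hg1 : IntervalIntegrable (fun x => (1 + u x^2)/2) MeasureTheory.volume
        (-Real.pi) Real.pi := ((_root_.intervalIntegrable_const (μ := MeasureTheory.volume) (c := (1:ℝ))).add hI).div_const 2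
    apply hg1.mono_fun hum.aestronglyMeasurable
    filter_upwards with x
    rw [Real.norm_eq_abs, Real.norm_eq_abs]
    have h1 : (0:ℝ) ≤ (1 + u x^2)/2 := by positivity
    rw [abs_of_nonneg h1]
    nlinarith [sq_nonneg (|u x| - 1), sq_abs (u x), abs_nonneg (u x)]
  -- the lifted function on the circle
  set U : AddCircle (2*Real.pi) → ℂ :=
    AddCircle.liftIoc (2*Real.pi) (-Real.pi) (fun x => ((u x : ℝ) : ℂ)) with hUdef
  have hUIoc : ∀ x ∈ Set.Ioc (-Real.pi) Real.pi, U (x : AddCircle (2*Real.pi)) = ((u x : ℝ):ℂ) := by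
    intro x hx
    apply AddCircle.liftIoc_coe_apply
    rw [show -Real.pi + 2*Real.pi = Real.pi from by ring]
    exact hx
  have hUm : Measurable U := by
    have : U = (fun y : Set.Ioc (-Real.pi) (-Real.pi + 2*Real.pi) => ((u (y:ℝ) : ℝ):ℂ))
        ∘ (AddCircle.measurableEquivIoc (2*Real.pi) (-Real.pi)) := rfl
    rw [this]
    exact ((Complex.measurable_ofReal.comp hum).comp measurable_subtype_coe).comp
      (AddCircle.measurableEquivIoc (2*Real.pi) (-Real.pi)).measurable
  -- integration by parts
  have hparts : ∀ m : ℤ,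
      (∫ x in (-Real.pi)..Real.pi, Complex.exp (Complex.I * ((-m:ℤ):ℂ) * x) * ((u x : ℝ):ℂ))
      = (Complex.I * ((-m:ℤ):ℂ)) *
        ∫ x in (-Real.pi)..Real.pi, Complex.exp (Complex.I * ((-m:ℤ):ℂ) * x) * ((g x : ℝ):ℂ) := by
    intro m
    set c : ℂ := Complex.I * ((-m:ℤ):ℂ) with hc
    clear_value c
    have hA : ∀ x : ℝ, HasDerivAt (fun y : ℝ => Complex.exp (c * y)) (c * Complex.exp (c * x)) x := by
      intro x
      have h1 : HasDerivAt (fun y : ℝ => ((y:ℝ):ℂ)) ((1:ℝ):ℂ) x := (hasDerivAt_id x).ofReal_comp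
      have h2 : HasDerivAt (fun y : ℝ => c * ((y:ℝ):ℂ)) (c * 1) x := h1.const_mul c
      have h3 := h2.cexp
      convert h3 using 1
      ring
    have hint1 : IntervalIntegrable (fun x : ℝ => c * Complex.exp (c * x))
        MeasureTheory.volume (-Real.pi) Real.pi := by
      apply Continuous.intervalIntegrable
      exact continuous_const.mul (Complex.continuous_exp.comp (continuous_const.mul
        Complex.continuous_ofReal))
    have hint2 : IntervalIntegrable (fun x : ℝ => ((-(u x) : ℝ):ℂ))
        MeasureTheory.volume (-Real.pi) Real.pi := ⟨(hIu.neg).1.ofReal, (hIu.neg).2.ofReal⟩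
    have hibp := intervalIntegral.integral_mul_deriv_eq_deriv_mul
      (u := fun y : ℝ => Complex.exp (c * y)) (u' := fun x : ℝ => c * Complex.exp (c * x))
      (v := fun y : ℝ => ((g y : ℝ):ℂ)) (v' := fun x : ℝ => ((-(u x) : ℝ):ℂ))
      (fun x _ => hA x) (fun x _ => (hgd x).ofReal_comp) hint1 hint2
    have hB : Complex.exp (c * (Real.pi:ℝ)) * ((g Real.pi : ℝ):ℂ)
        - Complex.exp (c * ((-Real.pi:ℝ):ℂ)) * ((g (-Real.pi) : ℝ):ℂ) = 0 := by
      have he : Complex.exp (c * (Real.pi:ℝ)) = Complex.exp (c * ((-Real.pi:ℝ):ℂ)) := by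
        rw [Complex.exp_eq_exp_iff_exists_int]
        exact ⟨-m, by rw [hc]; push_cast; ring⟩
      rw [he, hgper, sub_self]
    have hnegu : ∀ x : ℝ, Complex.exp (c * x) * ((u x : ℝ):ℂ)
        = -(Complex.exp (c * x) * ((-(u x) : ℝ):ℂ)) := by
      intro x; push_cast; ring
    rw [intervalIntegral.integral_congr (g := fun x =>
      -(Complex.exp (c * x) * ((-(u x) : ℝ):ℂ))) (fun x _ => hnegu x)]
    rw [intervalIntegral.integral_neg, hibp]
    rw [show Complex.exp (c * (Real.pi:ℝ)) * ((g Real.pi : ℝ):ℂ)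
        - Complex.exp (c * ((-Real.pi:ℝ):ℂ)) * ((g (-Real.pi) : ℝ):ℂ)
        - ∫ x in (-Real.pi)..Real.pi, c * Complex.exp (c * x) * ((g x:ℝ):ℂ)
      = -(∫ x in (-Real.pi)..Real.pi, c * Complex.exp (c * x) * ((g x:ℝ):ℂ)) + (Complex.exp (c * (Real.pi:ℝ)) * ((g Real.pi : ℝ):ℂ)
        - Complex.exp (c * ((-Real.pi:ℝ):ℂ)) * ((g (-Real.pi) : ℝ):ℂ)) from by ring, hB, add_zero,
      neg_neg]
    rw [show (fun x : ℝ => c * Complex.exp (c * x) * ((g x:ℝ):ℂ))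
      = fun x : ℝ => c * (Complex.exp (c * x) * ((g x:ℝ):ℂ)) from funext fun x => by ring]
    rw [intervalIntegral.integral_const_mul]
  -- the series computation of the g-integral
  have hswap : ∀ m : ℤ,
      (∫ x in (-Real.pi)..Real.pi, Complex.exp (Complex.I * ((-m:ℤ):ℂ) * x) * ((g x : ℝ):ℂ))
      = ((2 * Real.pi * cfn a m : ℝ) : ℂ) := by
    intro m
    set F : ℕ → ℝ → ℂ := fun n x => Complex.exp (Complex.I * ((-m:ℤ):ℂ) * x) *
      ((a n * Real.cos (n*x) * Real.cos (2*x) : ℝ):ℂ) with hF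
    clear_value F
    have hFcont : ∀ n, Continuous (F n) := by
      intro n
      simp only [hF]
      apply Continuous.mul
      · exact Complex.continuous_exp.comp (continuous_const.mul Complex.continuous_ofReal)
      · exact Complex.continuous_ofReal.comp
          ((continuous_const.mul (Real.continuous_cos.comp
            (continuous_const.mul continuous_id))).mul (Real.continuous_cos.comp
            (continuous_const.mul continuous_id)))
    have hFint : ∀ n, Integrable (F n)
        (MeasureTheory.volume.restrict (Set.Ioc (-Real.pi) Real.pi)) := by
      intro n
      exact (hFcont n).integrableOn_Ioc
    have hnorm : ∀ n x, ‖F n x‖ ≤ |a n| := by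
      intro n x
      simp only [hF, norm_mul]
      have h1 : ‖Complex.exp (Complex.I * ((-m:ℤ):ℂ) * x)‖ = 1 := by
        rw [show Complex.I * ((-m:ℤ):ℂ) * x = ((((-m:ℤ):ℝ) * x : ℝ):ℂ) * Complex.I from by
          push_cast; ring]
        exact Complex.norm_exp_ofReal_mul_I _
      rw [h1, one_mul, Complex.norm_real, Real.norm_eq_abs, abs_mul, abs_mul]
      have hc1 := Real.abs_cos_le_one ((n:ℝ)*x)
      have hc2 := Real.abs_cos_le_one (2*x)
      nlinarith [mul_nonneg (mul_nonneg (abs_nonneg (a n)) (abs_nonneg (Real.cos ((n:ℝ)*x))))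
          (sub_nonneg.mpr hc2),
        mul_nonneg (abs_nonneg (a n)) (sub_nonneg.mpr hc1)]
    have hFnorm_sum : Summable fun n => ∫ x in Set.Ioc (-Real.pi) Real.pi, ‖F n x‖ := by
      apply Summable.of_nonneg_of_le
        (fun n => integral_nonneg fun x => norm_nonneg _) _ (habs.mul_right (2*Real.pi))
      intro n
      have hconst : IntegrableOn (fun _ : ℝ => |a n|) (Set.Ioc (-Real.pi) Real.pi)
          MeasureTheory.volume := by
        exact integrableOn_const measure_Ioc_lt_top.ne
      calc (∫ x in Set.Ioc (-Real.pi) Real.pi, ‖F n x‖)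
          ≤ ∫ _ in Set.Ioc (-Real.pi) Real.pi, |a n| :=
            integral_mono ((hFint n).norm) hconst (fun x => hnorm n x)
        _ = |a n| * (2*Real.pi) := by
            rw [setIntegral_const, measureReal_def, Real.volume_Ioc, smul_eq_mul,
              ENNReal.toReal_ofReal (by linarith)]
            ring
    have hsum := hasSum_integral_of_summable_integral_norm hFint hFnorm_sum
    have hptsum : ∀ x : ℝ, (∑' n, F n x) =
        Complex.exp (Complex.I * ((-m:ℤ):ℂ) * x) * ((g x : ℝ):ℂ) := by
      intro x
      have h1 : HasSum (fun n => a n * Real.cos (n*x) * Real.cos (2*x)) (f x * Real.cos (2*x)) :=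
        (hf x).mul_right _
      have h2 : HasSum (fun n => ((a n * Real.cos (n*x) * Real.cos (2*x) : ℝ):ℂ))
          ((f x * Real.cos (2*x) : ℝ):ℂ) := Complex.hasSum_ofReal.mpr h1
      simp only [hg, hF]
      exact (h2.mul_left (Complex.exp (Complex.I * ((-m:ℤ):ℂ) * x))).tsum_eq
    have hval : ∀ n, (∫ x in Set.Ioc (-Real.pi) Real.pi, F n x)
        = ((a n * ((Real.pi/2) * ((if ((n:ℤ) = m-2) then (1:ℝ) else 0)
          + (if ((n:ℤ) = m+2) then (1:ℝ) else 0) + (if ((n:ℤ) = 2-m) then (1:ℝ) else 0)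
          + (if ((n:ℤ) = -m-2) then (1:ℝ) else 0))) : ℝ):ℂ) := by
      intro n
      rw [← intervalIntegral.integral_of_le (by linarith : -Real.pi ≤ Real.pi)]
      have hsplitF : ∀ x : ℝ, F n x = ((a n : ℝ):ℂ) *
          (Complex.exp (Complex.I * ((-m:ℤ):ℂ) * x) * ((Real.cos (n*x) : ℝ):ℂ)
            * ((Real.cos (2*x):ℝ):ℂ)) := by
        intro x; simp only [hF]; push_cast; ring
      rw [intervalIntegral.integral_congr (fun x _ => hsplitF x),
        intervalIntegral.integral_const_mul, integral_mode n m]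
      push_cast
      ring
    have hIocint : (∫ x in Set.Ioc (-Real.pi) Real.pi,
        Complex.exp (Complex.I * ((-m:ℤ):ℂ) * x) * ((g x : ℝ):ℂ)) = ∑' n, (∫ x in Set.Ioc (-Real.pi) Real.pi, F n x) := by
      rw [hsum.tsum_eq]
      apply setIntegral_congr_fun measurableSet_Ioc
      intro x _
      exact (hptsum x).symm
    rw [intervalIntegral.integral_of_le (by linarith : -Real.pi ≤ Real.pi), hIocint,
      tsum_congr hval, ← Complex.ofReal_tsum]
    congr 1
    have hterm : ∀ n : ℕ, a n * ((Real.pi/2) * ((if ((n:ℤ) = m-2) then (1:ℝ) else 0)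
          + (if ((n:ℤ) = m+2) then (1:ℝ) else 0) + (if ((n:ℤ) = 2-m) then (1:ℝ) else 0)
          + (if ((n:ℤ) = -m-2) then (1:ℝ) else 0)))
        = (Real.pi/2) * (a n * ((if ((n:ℤ) = m-2) then (1:ℝ) else 0)
          + (if ((n:ℤ) = m+2) then (1:ℝ) else 0) + (if ((n:ℤ) = 2-m) then (1:ℝ) else 0)
          + (if ((n:ℤ) = -m-2) then (1:ℝ) else 0))) := by
      intro n; ring
    rw [tsum_congr hterm, tsum_mul_left, tsum_four a ha0 m]
    simp only [cfn]
    ring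
  -- the Fourier coefficients of U
  have hcoeff : ∀ m : ℤ, fourierCoeff U m = -(Complex.I * (m:ℂ) * ((cfn a m : ℝ):ℂ)) := by
    intro m
    rw [fourierCoeff_eq_intervalIntegral U m (-Real.pi)]
    have hbound : -Real.pi + 2*Real.pi = Real.pi := by ring
    rw [hbound]
    have hcongr : (∫ x in (-Real.pi)..Real.pi,
          (fourier (-m) (x : AddCircle (2*Real.pi)) : ℂ) • U (x : AddCircle (2*Real.pi)))
        = ∫ x in (-Real.pi)..Real.pi,
          Complex.exp (Complex.I * ((-m:ℤ):ℂ) * x) * ((u x : ℝ):ℂ) := by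
      rw [intervalIntegral.integral_of_le (by linarith : -Real.pi ≤ Real.pi),
        intervalIntegral.integral_of_le (by linarith : -Real.pi ≤ Real.pi)]
      apply setIntegral_congr_fun measurableSet_Ioc
      intro x hx
      beta_reduce
      rw [smul_eq_mul, hUIoc x hx]
      congr 1
      rw [fourier_coe_apply]
      congr 1
      have hpne : (2*(Real.pi:ℂ)) ≠ 0 := by
        simp only [ne_eq, mul_eq_zero]
        push_neg
        constructor
        · norm_num
        · exact_mod_cast Real.pi_ne_zero
      field_simp
      push_cast
      ring
    rw [hcongr, hparts m, hswap m]
    rw [Complex.real_smul]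
    have hpne : ((Real.pi:ℂ)) ≠ 0 := by exact_mod_cast Real.pi_ne_zero
    push_cast
    field_simp
  -- norms of the coefficients
  have hnormcoeff : ∀ m : ℤ, ‖fourierCoeff U m‖^2 = (m:ℝ)^2 * cfn a m^2 := by
    intro m
    rw [hcoeff m, norm_neg, norm_mul, norm_mul, Complex.norm_I, one_mul,
      show ((m:ℂ)) = (((m:ℝ)):ℂ) from by push_cast; rfl,
      Complex.norm_real, Complex.norm_real, Real.norm_eq_abs, Real.norm_eq_abs,
      mul_pow, sq_abs, sq_abs]
  -- U is in L²
  have hIocU : IntegrableOn (fun x : ℝ => ‖U (x : AddCircle (2*Real.pi))‖^2)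
      (Set.Ioc (-Real.pi) Real.pi) MeasureTheory.volume := by
    have h0 : IntegrableOn (fun x => u x ^ 2) (Set.Ioc (-Real.pi) Real.pi)
        MeasureTheory.volume :=
      (intervalIntegrable_iff_integrableOn_Ioc_of_le (by linarith)).mp hI
    apply h0.congr_fun _ measurableSet_Ioc
    intro x hx
    beta_reduce
    rw [hUIoc x hx, Complex.norm_real, Real.norm_eq_abs, sq_abs]
  have hUvol : Integrable (fun z => ‖U z‖^2) (volume : Measure (AddCircle (2*Real.pi))) := by
    rw [← (AddCircle.measurePreserving_mk (2*Real.pi) (-Real.pi)).map_eq]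
    apply (integrable_map_measure ((hUm.norm.pow_const 2).aestronglyMeasurable)
      AddCircle.measurable_mk'.aemeasurable).mpr
    rw [show -Real.pi + 2*Real.pi = Real.pi from by ring]
    exact hIocU
  have hUhaar : Integrable (fun z => ‖U z‖^2) (@haarAddCircle (2*Real.pi) _) := by
    have hh : (@haarAddCircle (2*Real.pi) _) = (ENNReal.ofReal (2*Real.pi))⁻¹ •
        (volume : Measure (AddCircle (2*Real.pi))) := by
      rw [AddCircle.volume_eq_smul_haarAddCircle, smul_smul,
        ENNReal.inv_mul_cancel (by simp [Real.pi_pos]) ENNReal.ofReal_ne_top, one_smul]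
    rw [hh]
    exact hUvol.smul_measure (by simp [Real.pi_pos])
  have hU2 : MemLp U 2 (@haarAddCircle (2*Real.pi) _) := by
    apply (memLp_two_iff_integrable_sq_norm hUm.aestronglyMeasurable).mpr hUhaar
  -- Parseval
  have hpars : ∫ t, ‖U t‖^2 ∂(@haarAddCircle (2*Real.pi) _)
      = ∑' m : ℤ, ‖fourierCoeff U m‖^2 := by
    have h1 := tsum_sq_fourierCoeff (hU2.toLp U)
    have h2 : ∀ i : ℤ, fourierCoeff
        (((hU2.toLp U) : Lp ℂ 2 (@haarAddCircle (2*Real.pi) _)) : AddCircle (2*Real.pi) → ℂ) i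
        = fourierCoeff U i := by
      intro i
      simp only [fourierCoeff]
      exact integral_congr_ae ((hU2.coeFn_toLp).mono fun t ht => by simp only [ht])
    have h3 : (∫ t, ‖((hU2.toLp U : Lp ℂ 2 (@haarAddCircle (2*Real.pi) _))
          : AddCircle (2*Real.pi) → ℂ) t‖^2 ∂(@haarAddCircle (2*Real.pi) _))
        = ∫ t, ‖U t‖^2 ∂(@haarAddCircle (2*Real.pi) _) :=
      integral_congr_ae ((hU2.coeFn_toLp).mono fun t ht => by simp only [ht])
    rw [← h3, ← h1]
    exact (tsum_congr fun i => by rw [h2 i]).symm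
  -- integral identities
  have hIoc1 : (∫ x in (-Real.pi)..Real.pi, u x^2)
      = ∫ z, ‖U z‖^2 ∂(volume : Measure (AddCircle (2*Real.pi))) := by
    have h := AddCircle.intervalIntegral_preimage (2*Real.pi) (-Real.pi) (fun z => ‖U z‖^2)
    rw [show -Real.pi + 2*Real.pi = Real.pi from by ring] at h
    rw [← h, intervalIntegral.integral_of_le (by linarith : -Real.pi ≤ Real.pi),
      intervalIntegral.integral_of_le (by linarith : -Real.pi ≤ Real.pi)]
    apply setIntegral_congr_fun measurableSet_Ioc
    intro x hx
    beta_reduce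
    rw [hUIoc x hx, Complex.norm_real, Real.norm_eq_abs, sq_abs]
  have hvol2 : (∫ z, ‖U z‖^2 ∂(volume : Measure (AddCircle (2*Real.pi))))
      = (2*Real.pi) * ∫ z, ‖U z‖^2 ∂(@haarAddCircle (2*Real.pi) _) := by
    rw [AddCircle.volume_eq_smul_haarAddCircle, integral_smul_measure,
      ENNReal.toReal_ofReal Real.two_pi_pos.le, smul_eq_mul]
  obtain ⟨hLsum, hfinal⟩ := coeff_bound a ha0 ha1 hX
  calc (1/Real.pi) * (∫ x in (-Real.pi)..Real.pi, u x ^ 2)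
      = 2 * ∫ z, ‖U z‖^2 ∂(@haarAddCircle (2*Real.pi) _) := by
        rw [hIoc1, hvol2]
        field_simp
    _ = 2 * ∑' m : ℤ, ‖fourierCoeff U m‖^2 := by rw [hpars]
    _ = 2 * ∑' m : ℤ, (m:ℝ)^2 * cfn a m^2 := by rw [tsum_congr hnormcoeff]
    _ ≤ (17 / 4) * ∑' n : ℕ, ((n : ℝ) - 1) ^ 2 * a n ^ 2 := by
        have := hfinal
        linarith

end
end

section
/- For every integer n ≥ 1, E_n := Σ_{k=1}^∞ n²/(k²(k+n)²) = π²/6 + Σ_{k=n+1}^∞ 1/k² − (2/n) Σ_{k=1}^n 1/k, and consequently E_n < π²/3 − Σ_{k=1}^n 1/k². -/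
open Real

section aux

variable (n : ℕ)

private lemma aux_Sa : Summable (fun k : ℕ => 1 / ((k : ℝ) + 1) ^ 2) := by
  have := Real.summable_one_div_nat_pow.mpr (le_refl 2)
  have h := (summable_nat_add_iff 1).2 this
  apply h.congr
  intro k
  push_cast
  ring

private lemma aux_Sb : Summable (fun k : ℕ => 1 / ((k : ℝ) + n + 1) ^ 2) := by
  apply (aux_Sa).of_nonneg_of_le (fun k => by positivity)
  intro k
  apply one_div_le_one_div_of_le (by positivity)
  apply pow_le_pow_left₀ (by positivity)
  linarith [Nat.cast_nonneg (α := ℝ) n]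

private lemma aux_Sc : Summable (fun k : ℕ => 1 / (((k : ℝ) + 1) * ((k : ℝ) + 1 + n))) := by
  apply (aux_Sa).of_nonneg_of_le (fun k => by positivity)
  intro k
  apply one_div_le_one_div_of_le (by positivity)
  have h1 : (0:ℝ) < (k:ℝ) + 1 := by positivity
  nlinarith [Nat.cast_nonneg (α := ℝ) n]

private lemma aux_hA : HasSum (fun k : ℕ => 1 / ((k : ℝ) + 1) ^ 2) (π ^ 2 / 6) := by
  have h := (hasSum_nat_add_iff' (f := fun n : ℕ => (1 : ℝ) / (n : ℝ) ^ 2) 1).2 hasSum_zeta_two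
  simp only [Finset.range_one, Finset.sum_singleton, Nat.cast_zero] at h
  norm_num at h
  apply h.congr_fun
  intro k
  push_cast
  ring

-- partial sums of the telescoping series
private lemma aux_partial (hn : 1 ≤ n) (m : ℕ) :
    ∑ k ∈ Finset.range m, ((n : ℝ)) / (((k : ℝ) + 1) * ((k : ℝ) + 1 + n)) =
      (∑ k ∈ Finset.Icc 1 n, (1 / (k : ℝ))) - ∑ j ∈ Finset.range n, 1 / ((m : ℝ) + (j : ℝ) + 1) := by
  induction m with
  | zero =>
    simp only [Finset.range_zero, Finset.sum_empty, Nat.cast_zero]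
    rw [← Finset.Ico_add_one_right_eq_Icc, Finset.sum_Ico_eq_sum_range, eq_comm, sub_eq_zero]
    show ∑ k ∈ Finset.range n, (1:ℝ) / ((1 + k : ℕ):ℝ) = _
    apply Finset.sum_congr rfl
    intro j hj
    push_cast
    ring
  | succ m ih =>
    rw [Finset.sum_range_succ, ih]
    have key : ∑ j ∈ Finset.range n, 1 / (((m : ℝ) + 1) + (j : ℝ) + 1)
        = (∑ j ∈ Finset.range n, 1 / ((m : ℝ) + (j : ℝ) + 1))
          - 1 / ((m:ℝ) + 1) + 1 / ((m:ℝ) + 1 + n) := by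
      set g : ℕ → ℝ := fun j => 1 / ((m:ℝ) + (j:ℝ) + 1) with hg
      have h1 := Finset.sum_range_succ' g n
      have h2 := Finset.sum_range_succ g n
      have e1 : ∑ j ∈ Finset.range n, 1 / (((m:ℝ) + 1) + (j:ℝ) + 1)
          = ∑ x ∈ Finset.range n, g (x + 1) := by
        apply Finset.sum_congr rfl
        intro j _
        simp only [hg]
        push_cast
        ring
      rw [e1]
      have e2 : ∑ x ∈ Finset.range n, g (x + 1)
          = (∑ x ∈ Finset.range n, g x) + g n - g 0 := by linarith [h1, h2]
      rw [e2]
      simp only [hg]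
      push_cast
      ring
    have hm1 : ((m:ℝ) + 1) ≠ 0 := by positivity
    have hmn : ((m:ℝ) + 1 + n) ≠ 0 := by positivity
    push_cast
    rw [key]
    field_simp
    ring

private lemma aux_hC (hn : 1 ≤ n) :
    HasSum (fun k : ℕ => 1 / (((k : ℝ) + 1) * ((k : ℝ) + 1 + n)))
      ((∑ k ∈ Finset.Icc 1 n, (1 / (k : ℝ))) / n) := by
  have hn0 : (0:ℝ) < n := by exact_mod_cast hn
  rw [hasSum_iff_tendsto_nat_of_nonneg (fun k => by positivity)]
  have h1 : ∀ m : ℕ, ∑ k ∈ Finset.range m, 1 / (((k : ℝ) + 1) * ((k : ℝ) + 1 + n)) =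
      ((∑ k ∈ Finset.Icc 1 n, (1 / (k : ℝ))) - ∑ j ∈ Finset.range n, 1 / ((m : ℝ) + (j : ℝ) + 1)) / n := by
    intro m
    rw [← aux_partial n hn m, Finset.sum_div]
    apply Finset.sum_congr rfl
    intro k _
    field_simp
  simp only [h1]
  have htail : Filter.Tendsto (fun m : ℕ => ∑ j ∈ Finset.range n, 1 / ((m : ℝ) + (j : ℝ) + 1))
      Filter.atTop (nhds 0) := by
    have : Filter.Tendsto (fun m : ℕ => (n : ℝ) / ((m : ℝ) + 1)) Filter.atTop (nhds 0) := by
      apply Filter.Tendsto.div_atTop (tendsto_const_nhds)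
      exact Filter.tendsto_atTop_add_const_right _ 1 tendsto_natCast_atTop_atTop
    apply squeeze_zero (fun m => Finset.sum_nonneg (fun j _ => by positivity)) _ this
    intro m
    calc ∑ j ∈ Finset.range n, 1 / ((m : ℝ) + (j : ℝ) + 1)
        ≤ ∑ j ∈ Finset.range n, 1 / ((m : ℝ) + 1) := by
          apply Finset.sum_le_sum
          intro j _
          apply one_div_le_one_div_of_le (by positivity)
          linarith [Nat.cast_nonneg (α := ℝ) j]
      _ = (n : ℝ) / ((m : ℝ) + 1) := by
          rw [Finset.sum_const, Finset.card_range]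
          simp [div_eq_mul_inv]
  have := ((tendsto_const_nhds (x := (∑ k ∈ Finset.Icc 1 n, (1 / (k : ℝ))))).sub htail).div_const (n : ℝ)
  simpa using this

end aux

/-- for every integer `n ≥ 1`,
`E_n := Σ_{k=1}^∞ n²/(k²(k+n)²) = π²/6 + Σ_{k=n+1}^∞ 1/k² − (2/n) Σ_{k=1}^n 1/k`, and
consequently `E_n < π²/3 − Σ_{k=1}^n 1/k²`. -/
theorem stmt6 (n : ℕ) (hn : 1 ≤ n) :
    (∑' k : ℕ, (n : ℝ) ^ 2 / (((k : ℝ) + 1) ^ 2 * ((k : ℝ) + 1 + n) ^ 2)) =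
      π ^ 2 / 6 + (∑' k : ℕ, 1 / ((k : ℝ) + n + 1) ^ 2)
        - (2 / n) * ∑ k ∈ Finset.Icc 1 n, (1 / (k : ℝ)) ∧
    (∑' k : ℕ, (n : ℝ) ^ 2 / (((k : ℝ) + 1) ^ 2 * ((k : ℝ) + 1 + n) ^ 2)) <
      π ^ 2 / 3 - ∑ k ∈ Finset.Icc 1 n, (1 / (k : ℝ) ^ 2) := by
  have hn0 : (0:ℝ) < n := by exact_mod_cast hn
  have Sa := aux_Sa
  have Sb := aux_Sb n
  have Sc := aux_Sc n
  have hA := aux_hA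
  have hC := aux_hC n hn
  set H : ℝ := ∑ k ∈ Finset.Icc 1 n, (1 / (k : ℝ)) with hH
  -- partial fraction identity
  have hfun : ∀ k : ℕ, (n : ℝ) ^ 2 / (((k : ℝ) + 1) ^ 2 * ((k : ℝ) + 1 + n) ^ 2) =
      (1 / ((k : ℝ) + 1) ^ 2 + 1 / ((k : ℝ) + n + 1) ^ 2)
        - 2 * (1 / (((k : ℝ) + 1) * ((k : ℝ) + 1 + n))) := by
    intro k
    have h1 : ((k:ℝ) + 1) ≠ 0 := by positivity
    have h2 : ((k:ℝ) + 1 + n) ≠ 0 := by positivity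
    have h3 : ((k:ℝ) + n + 1) ≠ 0 := by positivity
    field_simp
    ring
  have hE : (∑' k : ℕ, (n : ℝ) ^ 2 / (((k : ℝ) + 1) ^ 2 * ((k : ℝ) + 1 + n) ^ 2)) =
      π ^ 2 / 6 + (∑' k : ℕ, 1 / ((k : ℝ) + n + 1) ^ 2) - (2 / n) * H := by
    rw [tsum_congr hfun, Summable.tsum_sub (Sa.add Sb) (Sc.mul_left 2), Summable.tsum_add Sa Sb,
      tsum_mul_left, hA.tsum_eq, hC.tsum_eq]
    field_simp
  refine ⟨hE, ?_⟩
  rw [hE]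
  -- π²/6 = ∑_{k=1}^n 1/k² + tail
  have hsplit : ∑ k ∈ Finset.range n, (1 / ((k : ℝ) + 1) ^ 2)
      + (∑' k : ℕ, 1 / (((k + n : ℕ) : ℝ) + 1) ^ 2) = π ^ 2 / 6 := by
    rw [Summable.sum_add_tsum_nat_add n Sa, hA.tsum_eq]
  have hcast : (∑' k : ℕ, 1 / (((k + n : ℕ) : ℝ) + 1) ^ 2)
      = ∑' k : ℕ, 1 / ((k : ℝ) + n + 1) ^ 2 := by
    apply tsum_congr
    intro k
    push_cast
    ring_nf
  have hS : ∑ k ∈ Finset.range n, (1 / ((k : ℝ) + 1) ^ 2)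
      = ∑ k ∈ Finset.Icc 1 n, (1 / (k : ℝ) ^ 2) := by
    rw [← Finset.Ico_add_one_right_eq_Icc, Finset.sum_Ico_eq_sum_range]
    apply Finset.sum_congr rfl
    intro j _
    push_cast
    ring
  rw [hcast, hS] at hsplit
  have hHpos : 0 < H := by
    apply Finset.sum_pos
    · intro k hk
      simp only [Finset.mem_Icc] at hk
      have : (0:ℝ) < k := by exact_mod_cast hk.1
      positivity
    · exact ⟨1, by simp [hn]⟩
  have : 0 < (2 / (n:ℝ)) * H := by positivity
  linarith
end

section
/- Let λ_n(ε) be complex functions of n ∈ ℤ\{0} and small real ε of the form λ_n(ε) = (n + sgn n) c_ε i − i sgn n + r_n(ε), where c_ε = 1 − ε²/4 + O(ε³) is real and |r_n(ε)| ≤ C' ε⁶ uniformly in n. Then there is ε₀ > 0 such that for all 0 < |ε| < ε₀ and all m, n, l ∈ ℤ with mnl ≠ 0: (i) if m + n + l ≠ 0 then |λ_m(ε) + λ_n(ε) + λ_l(ε)| > |m + n + l|/2; (ii) if m + n + l = 0 then |λ_m(ε) + λ_n(ε) + λ_l(ε)| > ε²/5. -/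
open Complex

lemma sign_pm' (m : ℤ) (hm : m ≠ 0) : m.sign = 1 ∨ m.sign = -1 := by
  rcases lt_trichotomy m 0 with h | h | h
  · right; exact Int.sign_eq_neg_one_iff_neg.mpr h
  · exact absurd h hm
  · left; exact Int.sign_eq_one_iff_pos.mpr h

/-- Proposition `non-res`: suppose
`λ_n(ε) = (n + sgn n) c_ε i − i sgn n + r_n(ε)` for `n ≠ 0`, where `c_ε` is real with
`c_ε = 1 − ε²/4 + O(ε³)` and `|r_n(ε)| ≤ C' ε⁶` uniformly in `n`.  Then there is `ε₀ > 0`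
such that for all `0 < |ε| < ε₀` and all nonzero integers `m, n, l`:
(i) if `m + n + l ≠ 0` then `|λ_m + λ_n + λ_l| > |m + n + l|/2`;
(ii) if `m + n + l = 0` then `|λ_m + λ_n + λ_l| > ε²/5`. -/
theorem stmt12 (c : ℝ → ℝ) (r : ℤ → ℝ → ℂ) (lam : ℤ → ℝ → ℂ) (C₁ C' : ℝ)
    (hc : ∀ ε : ℝ, |ε| ≤ 1 → |c ε - (1 - ε ^ 2 / 4)| ≤ C₁ * |ε| ^ 3)
    (hr : ∀ n : ℤ, n ≠ 0 → ∀ ε : ℝ, ‖r n ε‖ ≤ C' * ε ^ 6)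
    (hlam : ∀ n : ℤ, n ≠ 0 → ∀ ε : ℝ,
      lam n ε = ((n : ℂ) + (n.sign : ℂ)) * (c ε : ℂ) * Complex.I
        - Complex.I * (n.sign : ℂ) + r n ε) :
    ∃ ε₀ > 0, ∀ ε : ℝ, 0 < |ε| → |ε| < ε₀ →
      ∀ m n l : ℤ, m ≠ 0 → n ≠ 0 → l ≠ 0 →
        (m + n + l ≠ 0 →
          (|(m + n + l : ℤ)| : ℝ) / 2 < ‖lam m ε + lam n ε + lam l ε‖) ∧
        (m + n + l = 0 → ε ^ 2 / 5 < ‖lam m ε + lam n ε + lam l ε‖) := by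
  set D : ℝ := |C₁| + |C'| + 1 with hDdef
  have hD1 : (1:ℝ) ≤ D := by
    have := abs_nonneg C₁; have := abs_nonneg C'
    rw [hDdef]; linarith
  have hDpos : (0:ℝ) < D := lt_of_lt_of_le one_pos hD1
  refine ⟨min 1 (1/(100*D)), lt_min one_pos (by positivity), ?_⟩
  intro ε hε0 hεlt m n l hm hn hl
  set t : ℝ := |ε| with htdef
  have ht0 : 0 < t := hε0
  have ht1 : t < 1 := lt_of_lt_of_le hεlt (min_le_left _ _)
  have htD : t < 1/(100*D) := lt_of_lt_of_le hεlt (min_le_right _ _)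
  have hDt : D * t ≤ 1/100 := by
    rw [lt_div_iff₀ (by positivity)] at htD
    nlinarith
  have ht00 : t ≤ 1/100 := by nlinarith
  have e2 : ε^2 = t^2 := by rw [htdef, _root_.sq_abs]
  have e6 : ε^6 = t^6 := by
    rw [htdef, ← _root_.abs_pow, _root_.abs_of_nonneg (by positivity : (0:ℝ) ≤ ε^6)]
  -- bounds on powers of t
  have hDt3 : D * t^3 ≤ t^2/100 := by
    nlinarith [mul_le_mul_of_nonneg_right hDt (sq_nonneg t)]
  have ht5 : t^5 ≤ t^2 := pow_le_pow_of_le_one ht0.le ht1.le (by norm_num)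
  have hDt6 : D * t^6 ≤ t^2/100 := by
    have h := mul_le_mul hDt ht5 (by positivity) (by norm_num)
    nlinarith
  have ht2b : t^2 ≤ 1/10000 := by nlinarith
  -- sign sum
  set S : ℤ := m.sign + n.sign + l.sign with hSdef
  have hS : S = 3 ∨ S = 1 ∨ S = -1 ∨ S = -3 := by
    rcases sign_pm' m hm with h1|h1 <;> rcases sign_pm' n hn with h2|h2 <;>
      rcases sign_pm' l hl with h3|h3 <;> omega
  have hs3 : |((S:ℤ):ℝ)| ≤ 3 := by
    rcases hS with h|h|h|h <;> rw [h] <;> norm_num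
  have hs1 : (1:ℝ) ≤ |((S:ℤ):ℝ)| := by
    rcases hS with h|h|h|h <;> rw [h] <;> norm_num
  -- the main algebraic identity
  have hsum : lam m ε + lam n ε + lam l ε
      = ((c ε * (((m+n+l : ℤ):ℝ) + ((S:ℤ):ℝ)) - ((S:ℤ):ℝ) : ℝ) : ℂ) * Complex.I
        + (r m ε + r n ε + r l ε) := by
    rw [hlam m hm ε, hlam n hn ε, hlam l hl ε, hSdef]
    push_cast
    ring
  set x : ℝ := c ε * (((m+n+l : ℤ):ℝ) + ((S:ℤ):ℝ)) - ((S:ℤ):ℝ) with hxdef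
  set R : ℂ := r m ε + r n ε + r l ε with hRdef
  have hnorm : |x| - ‖R‖ ≤ ‖lam m ε + lam n ε + lam l ε‖ := by
    rw [hsum]
    have h := norm_le_add_norm_add ((x:ℂ) * Complex.I) R
    have hx : ‖(x:ℂ) * Complex.I‖ = |x| := by
      simp [Complex.norm_real]
    linarith [hx ▸ h]
  -- bound on R
  have hC'D : C' ≤ D := by
    have h1 := le_abs_self C'
    have h2 := abs_nonneg C₁
    rw [hDdef]; linarith
  have hRbound : ‖R‖ ≤ 3 * (D * t^6) := by
    have b : ∀ j : ℤ, j ≠ 0 → ‖r j ε‖ ≤ D * t^6 := by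
      intro j hj
      calc ‖r j ε‖ ≤ C' * ε^6 := hr j hj ε
        _ ≤ D * t^6 := by rw [e6]; exact mul_le_mul_of_nonneg_right hC'D (by positivity)
    calc ‖R‖ ≤ ‖r m ε‖ + ‖r n ε‖ + ‖r l ε‖ := norm_add₃_le
      _ ≤ 3 * (D * t^6) := by linarith [b m hm, b n hn, b l hl]
  -- bounds on c
  have hcb : |c ε - (1 - ε^2/4)| ≤ D * t^3 := by
    have h := hc ε ht1.le
    rw [← htdef] at h
    have hC₁D : C₁ ≤ D := by
      have h1 := le_abs_self C₁
      have h2 := abs_nonneg C'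
      rw [hDdef]; linarith
    calc |c ε - (1 - ε^2/4)| ≤ C₁ * t^3 := h
      _ ≤ D * t^3 := mul_le_mul_of_nonneg_right hC₁D (by positivity)
  have hcb' := abs_le.mp hcb
  have hc_lb : 1 - t^2/4 - D*t^3 ≤ c ε := by
    have := hcb'.1; linarith [e2]
  have hc_ub1 : |c ε - 1| ≤ t^2/4 + D*t^3 := by
    rw [abs_le]
    constructor <;> [linarith [hcb'.1]; linarith [hcb'.2]]
  have hc_lb1 : t^2/4 - D*t^3 ≤ |c ε - 1| := by
    have h2 := hcb'.2
    have h3 := neg_le_abs (c ε - 1)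
    linarith
  clear_value D t S x R
  refine ⟨?_, ?_⟩
  · -- case (i): m+n+l ≠ 0
    intro hk
    have hk1 : (1:ℝ) ≤ |((m+n+l : ℤ):ℝ)| := by
      rw [← Int.cast_abs]
      exact_mod_cast Int.one_le_abs hk
    have hc9 : (9:ℝ)/10 ≤ c ε := by linarith
    have hc0 : (0:ℝ) ≤ c ε := by linarith
    -- lower bound on |x|
    have hx1 : |((m+n+l : ℤ):ℝ)| * c ε - 3 * |c ε - 1| ≤ |x| := by
      have hxe : x = c ε * ((m+n+l : ℤ):ℝ) + ((S:ℤ):ℝ) * (c ε - 1) := by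
        rw [hxdef]; ring
      have htri := abs_sub_abs_le_abs_sub (c ε * ((m+n+l : ℤ):ℝ))
        (-(((S:ℤ):ℝ) * (c ε - 1)))
      rw [sub_neg_eq_add, abs_neg, ← hxe] at htri
      have h1 : |c ε * ((m+n+l : ℤ):ℝ)| = |((m+n+l : ℤ):ℝ)| * c ε := by
        rw [abs_mul, _root_.abs_of_nonneg hc0]; ring
      have h2 : |((S:ℤ):ℝ) * (c ε - 1)| ≤ 3 * |c ε - 1| :=
        by rw [abs_mul]; exact mul_le_mul_of_nonneg_right hs3 (abs_nonneg _)
      linarith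
    have hmul : |((m+n+l : ℤ):ℝ)| * (9/10) ≤ |((m+n+l : ℤ):ℝ)| * c ε :=
      mul_le_mul_of_nonneg_left hc9 (abs_nonneg _)
    linarith [hnorm, hx1, hRbound, hc_ub1, hDt3, hDt6, ht2b, hk1, hmul]
  · -- case (ii): m+n+l = 0
    intro hk
    have hkR : ((m+n+l : ℤ):ℝ) = 0 := by rw [hk]; exact Int.cast_zero
    have hxe : x = ((S:ℤ):ℝ) * (c ε - 1) := by rw [hxdef, hkR]; ring
    have hx1 : |c ε - 1| ≤ |x| := by
      rw [hxe, abs_mul]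
      have := mul_le_mul_of_nonneg_right hs1 (abs_nonneg (c ε - 1))
      linarith
    have htsq : 0 < t^2 := by positivity
    rw [e2]
    linarith [hnorm, hx1, hRbound, hc_lb1, hDt3, hDt6]
end
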